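/- Let d ≥ 2, let T be an infinite d-ary rooted tree, and let G be an abelian subgroup of Aut(T). Then the Minkowski dimension of (the closure of) G exists and dim(G) = 0. -/

import Mathlib

open scoped Classical

noncomputable section

/-! ### Minkowski dimension machinery for groups of automorphisms of rooted trees

A rooted tree is presented by its levels `V 0, V 1, V 2, …` (with `V 0` the root level)
together with parent maps `V (n+1) → V n`.  An automorphism is a family of permutations
of the levels commuting with the parent maps; it is in particular determined by a point of
`∀ k, Equiv.Perm (V k)`.  The restriction `r_n σ` of `σ` to the height-`n` subtree is the
tuple `(σ 0, …, σ n)`, and the natural metric is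
`d(σ,τ) = inf { d!^{-(dⁿ-1)/(d-1)} : r_n σ = r_n τ }`. -/

/-- The exponent `(dⁿ - 1)/(d - 1) = 1 + d + ⋯ + d^(n-1)`. -/
def scaleExp (d n : ℕ) : ℕ := ∑ i ∈ Finset.range n, d ^ i

/-- The scale `ε_n = d!^{-(dⁿ-1)/(d-1)}`, i.e. `1/|Aut(Tₙᶜᵒᵐ)|`. -/
def treeScale (d n : ℕ) : ℝ := ((d.factorial : ℝ) ^ scaleExp d n)⁻¹

/-- Two families of level permutations restrict to the same automorphism of the
height-`n` subtree. -/
def AgreeUpTo {V : ℕ → Type*} (n : ℕ) (σ τ : ∀ k, Equiv.Perm (V k)) : Prop :=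
  ∀ k, k ≤ n → σ k = τ k

/-- The natural metric on automorphisms of a rooted `d`-ary tree:
`d(σ,τ) = inf { d!^{-(dⁿ-1)/(d-1)} : σ and τ agree on the height-n subtree }`. -/
def treeDist {V : ℕ → Type*} (d : ℕ) (σ τ : ∀ k, Equiv.Perm (V k)) : ℝ :=
  sInf {x : ℝ | ∃ n : ℕ, AgreeUpTo n σ τ ∧ x = treeScale d n}

/-- `N_{ε_n}(G)`: the least number of balls of radius `ε_n = treeScale d n` needed to
cover `G`. -/
def coverNum {V : ℕ → Type*} (d : ℕ) (G : Set (∀ k, Equiv.Perm (V k))) (n : ℕ) : ℕ :=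
  sInf {m : ℕ | ∃ s : Finset (∀ k, Equiv.Perm (V k)), s.card = m ∧
    G ⊆ ⋃ σ ∈ s, {τ | treeDist d σ τ ≤ treeScale d n}}

/-- The lower Minkowski dimension `liminf_{ε → 0} log N_ε(G) / log (1/ε)` (computed
along the scales `ε_n` of the metric). -/
def dimLower {V : ℕ → Type*} (d : ℕ) (G : Set (∀ k, Equiv.Perm (V k))) : ℝ :=
  Filter.liminf
    (fun n : ℕ => Real.log (coverNum d G n : ℝ) / Real.log (1 / treeScale d n)) Filter.atTop

/-- The upper Minkowski dimension `limsup_{ε → 0} log N_ε(G) / log (1/ε)` (computed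
along the scales `ε_n` of the metric). -/
def dimUpper {V : ℕ → Type*} (d : ℕ) (G : Set (∀ k, Equiv.Perm (V k))) : ℝ :=
  Filter.limsup
    (fun n : ℕ => Real.log (coverNum d G n : ℝ) / Real.log (1 / treeScale d n)) Filter.atTop

/-- The Minkowski dimension of `G` exists and equals `x`. -/
def HasDim {V : ℕ → Type*} (d : ℕ) (G : Set (∀ k, Equiv.Perm (V k))) (x : ℝ) : Prop :=
  dimLower d G = x ∧ dimUpper d G = x

/-- `G` is closed for the natural metric. -/
def IsDistClosed {V : ℕ → Type*} (d : ℕ) (G : Set (∀ k, Equiv.Perm (V k))) : Prop :=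
  ∀ σ, (∀ ε : ℝ, 0 < ε → ∃ τ ∈ G, treeDist d σ τ ≤ ε) → σ ∈ G

/-- The closure of `G` for the natural metric. -/
def distClosure {V : ℕ → Type*} (d : ℕ) (G : Set (∀ k, Equiv.Perm (V k))) :
    Set (∀ k, Equiv.Perm (V k)) :=
  {σ | ∀ ε : ℝ, 0 < ε → ∃ τ ∈ G, treeDist d σ τ ≤ ε}

/-- `|r_n(G)|`: the cardinality of the restriction of `G` to the height-`n` subtree. -/
def levelCard {V : ℕ → Type*} (G : Set (∀ k, Equiv.Perm (V k))) (n : ℕ) : ℕ :=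
  Nat.card ((fun (σ : ∀ k, Equiv.Perm (V k)) (k : Fin (n + 1)) => σ k.1) '' G)

end
noncomputable section

/-- An infinite `d`-ary rooted tree, presented by its levels: `V n` is the set of
level-`n` vertices, `parent` maps a vertex to its parent, there is a unique root,
and every vertex has at least `1` and at most `d` children. -/
structure DaryTree (d : ℕ) where
  V : ℕ → Type
  parent : ∀ n, V (n + 1) → V n
  root_card : Nat.card (V 0) = 1
  child_lb : ∀ n (v : V n), 1 ≤ Nat.card {w : V (n + 1) // parent n w = v}
  child_ub : ∀ n (v : V n), Nat.card {w : V (n + 1) // parent n w = v} ≤ d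

/-- The group of automorphisms of a rooted tree presented by levels and parent maps:
families of level permutations fixing the root level structure and commuting with
the parent maps. -/
def autGroup {V : ℕ → Type*} (parent : ∀ n, V (n + 1) → V n) :
    Subgroup (∀ n, Equiv.Perm (V n)) where
  carrier := {σ | ∀ n (v : V (n + 1)), parent n (σ (n + 1) v) = σ n (parent n v)}
  one_mem' := by intro n v; rfl
  mul_mem' := by
    intro a b ha hb n v
    simp only [Pi.mul_apply, Equiv.Perm.mul_apply]
    rw [ha, hb]
  inv_mem' := by
    intro a ha n v
    simp only [Pi.inv_apply]
    have h := ha n ((a (n + 1))⁻¹ v)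
    rw [show (a (n + 1)) ((a (n + 1))⁻¹ v) = v from Equiv.apply_symm_apply _ _] at h
    rw [h]; exact (Equiv.symm_apply_apply _ _).symm

/-- The automorphism group `Aut(T)` of an infinite `d`-ary rooted tree. -/
def DaryTree.aut {d : ℕ} (T : DaryTree d) : Subgroup (∀ n, Equiv.Perm (T.V n)) :=
  autGroup T.parent

/-- A `d`-ary rooted tree is complete if every vertex has exactly `d` children. -/
def DaryTree.IsComplete {d : ℕ} (T : DaryTree d) : Prop :=
  ∀ n (v : T.V n), Nat.card {w : T.V (n + 1) // T.parent n w = v} = d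

end

/-!
Write `K_n` for the elements of `G` acting trivially on the levels `≤ n`. The closure of `G`
is covered by `|r_n(G)|` balls of radius `ε_n`, and `|r_{n+1}(G)| ≤ |r_n(G)| · |r_{n+1}(K_n)|`.
Call a vertex of level `n + 1` moved if `K_n` moves it, and a vertex active if it has a moved
child. Since `G` is abelian, `K_n` commutes with `G`, so the action of `K_n` on the children of
`g v` is conjugate to its action on the children of `v`. Hence `|r_{n+1}(K_n)| ≤ d!^{a_n}`, where
`a_n` counts the `G`-orbits of active vertices of level `n`. As
`log (1/ε_n) = (1 + d + ⋯ + d^{n-1}) log d!`, it suffices to show `a_n = o(dⁿ)`.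

Let `M(v)` be the number of moved vertices on the path from the root to `v`. Every moved vertex
at least doubles the orbit, so `|G v| ≥ 2^{M(v)}` and
`a_n ≤ ∑_{active v} 2^{-M(v)} ≤ 2 ∑_{moved w} 2^{-M(w)}`. Weigh the vertices with the mass
`μ ≥ d^{-n}` obtained by splitting the mass of each vertex equally among its children. The
potential `∑_v μ(v) 2^{-M(v)}` over level `n` equals `1` at the root, stays nonnegative, and drops
by `∑_{moved w} μ(w) 2^{-M(w)} ≥ d^{-(n+1)} ∑_{moved w} 2^{-M(w)}` from level `n` to level
`n + 1`. The drops are summable, so they tend to `0`, which gives `a_n = o(dⁿ)`.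
-/

open Finset Filter Topology Asymptotics Equiv
open scoped Nat

noncomputable section

section Scale

lemma le_scaleExp {d : ℕ} (hd : 1 ≤ d) (n : ℕ) : n ≤ scaleExp d n := by
  simpa [scaleExp] using card_nsmul_le_sum (range n) (d ^ ·) 1 fun i _ => Nat.one_le_pow i d hd

lemma scaleExp_strictMono {d : ℕ} (hd : 1 ≤ d) : StrictMono (scaleExp d) := by
  refine strictMono_nat_of_lt_succ fun n => ?_
  simp only [scaleExp, sum_range_succ]
  have := Nat.one_le_pow n d hd
  omega

lemma treeScale_pos (d n : ℕ) : 0 < treeScale d n := by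
  unfold treeScale
  have := d.factorial_pos
  positivity

lemma treeScale_strictAnti {d : ℕ} (hd : 2 ≤ d) : StrictAnti (treeScale d) := by
  intro m n hmn
  have hfac : (1 : ℝ) < d ! := by exact_mod_cast Nat.one_lt_factorial.mpr hd
  exact inv_strictAnti₀ (by positivity)
    (pow_lt_pow_right₀ hfac (scaleExp_strictMono (by omega) hmn))

lemma log_one_div_treeScale (d n : ℕ) :
    Real.log (1 / treeScale d n) = scaleExp d n * Real.log d ! := by
  rw [one_div, treeScale, inv_inv, Real.log_pow]

end Scale

section Metric

variable {V : ℕ → Type*} {d n : ℕ} {σ τ : ∀ k, Perm (V k)}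

lemma treeDist_le_of_agreeUpTo (h : AgreeUpTo n σ τ) : treeDist d σ τ ≤ treeScale d n :=
  csInf_le ⟨0, by rintro _ ⟨m, -, rfl⟩; exact (treeScale_pos d m).le⟩ ⟨n, h, rfl⟩

/-- If `σ 0 ≠ τ 0`, no level agrees and `treeDist d σ τ` is the junk value `sInf ∅ = 0`. -/
lemma agreeUpTo_of_treeDist_le (hd : 2 ≤ d) (h0 : σ 0 = τ 0)
    (h : treeDist d σ τ ≤ treeScale d n) : AgreeUpTo n σ τ := by
  by_contra hn
  have hn0 : n ≠ 0 := by
    rintro rfl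
    exact hn fun k hk => by obtain rfl := Nat.le_zero.mp hk; exact h0
  have hlb : treeScale d (n - 1) ≤ treeDist d σ τ := by
    refine le_csInf ⟨_, 0, fun k hk => by obtain rfl := Nat.le_zero.mp hk; exact h0, rfl⟩ ?_
    rintro _ ⟨m, hm, rfl⟩
    refine (treeScale_strictAnti hd).antitone (Nat.le_of_not_lt fun hlt => hn fun k hk => ?_)
    exact hm k (by omega)
  exact (hlb.trans h).not_gt (treeScale_strictAnti hd (by omega))

end Metric

section Dimension

variable {V : ℕ → Type*} {d : ℕ}

lemma hasDim_zero_of_coverNum_le (hd : 2 ≤ d) {G : Set (∀ k, Perm (V k))} (A : ℕ → ℕ)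
    (hN : ∀ n, coverNum d G n ≤ d ! ^ A n)
    (hA : Tendsto (fun n => (A n : ℝ) / scaleExp d n) atTop (𝓝 0)) : HasDim d G 0 := by
  have hlogfac : 0 < Real.log d ! := Real.log_pos (by exact_mod_cast Nat.one_lt_factorial.mpr hd)
  have hlow : ∀ n, 0 ≤ Real.log (coverNum d G n) / Real.log (1 / treeScale d n) := fun n => by
    rw [log_one_div_treeScale]
    exact div_nonneg (Real.log_natCast_nonneg _) (by positivity)
  have hup : ∀ n, Real.log (coverNum d G n) / Real.log (1 / treeScale d n)
      ≤ A n / scaleExp d n := fun n => by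
    have hlogN : Real.log (coverNum d G n) ≤ A n * Real.log d ! := by
      rcases (coverNum d G n).eq_zero_or_pos with h0 | hpos
      · rw [h0, Nat.cast_zero, Real.log_zero]
        positivity
      · calc Real.log (coverNum d G n) ≤ Real.log ((d ! : ℝ) ^ A n) :=
              Real.log_le_log (by exact_mod_cast hpos) (by exact_mod_cast hN n)
          _ = A n * Real.log d ! := Real.log_pow _ _
    rw [log_one_div_treeScale, mul_comm, ← div_div]
    exact div_le_div_of_nonneg_right ((div_le_iff₀ hlogfac).mpr hlogN) (Nat.cast_nonneg _)
  have h := tendsto_of_tendsto_of_tendsto_of_le_of_le tendsto_const_nhds hA hlow hup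
  exact ⟨h.liminf_eq, h.limsup_eq⟩

end Dimension

section Levels

variable {V : ℕ → Type*}

def levelStab (G : Subgroup (∀ k, Perm (V k))) (n : ℕ) : Subgroup (∀ k, Perm (V k)) where
  carrier := {π | π ∈ G ∧ ∀ j ≤ n, π j = 1}
  one_mem' := ⟨G.one_mem, fun _ _ => rfl⟩
  mul_mem' := fun ha hb => ⟨G.mul_mem ha.1 hb.1, fun j hj => by
    simp only [Pi.mul_apply, ha.2 j hj, hb.2 j hj, mul_one]⟩
  inv_mem' := fun ha => ⟨G.inv_mem ha.1, fun j hj => by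
    simp only [Pi.inv_apply, ha.2 j hj, inv_one]⟩

def levelStabAction (G : Subgroup (∀ k, Perm (V k))) (n : ℕ) : Set (Perm (V (n + 1))) :=
  (fun π => π (n + 1)) '' (levelStab G n : Set (∀ k, Perm (V k)))

def IsMoved (G : Subgroup (∀ k, Perm (V k))) (n : ℕ) (w : V (n + 1)) : Prop :=
  ∃ π ∈ levelStab G n, π (n + 1) w ≠ w

/-- The restriction map `r_n`. -/
def restrictLevels (n : ℕ) (σ : ∀ k, Perm (V k)) (k : Fin (n + 1)) : Perm (V k) := σ k

lemma restrictLevels_succ_eq {n : ℕ} {σ τ : ∀ k, Perm (V k)}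
    (h : restrictLevels n σ = restrictLevels n τ) (h' : σ (n + 1) = τ (n + 1)) :
    restrictLevels (n + 1) σ = restrictLevels (n + 1) τ := by
  funext ⟨j, hj⟩
  rcases Nat.lt_succ_iff_lt_or_eq.mp hj with hj | rfl
  · exact congrFun h ⟨j, hj⟩
  · exact h'

variable [∀ k, Finite (V k)]

lemma coverNum_distClosure_le_levelCard [Subsingleton (V 0)] {d : ℕ} (hd : 2 ≤ d)
    (G : Set (∀ k, Perm (V k))) (n : ℕ) : coverNum d (distClosure d G) n ≤ levelCard G n := by
  have hfin : (restrictLevels n '' G).Finite := Set.toFinite _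
  set s := hfin.toFinset.image (Function.invFunOn (restrictLevels n) G)
  have hcover : distClosure d G ⊆ ⋃ σ ∈ s, {τ | treeDist d σ τ ≤ treeScale d n} := by
    intro τ hτ
    obtain ⟨g, hg, hgτ⟩ := hτ (treeScale d n) (treeScale_pos d n)
    have hτg := agreeUpTo_of_treeDist_le hd (Subsingleton.elim _ _) hgτ
    have hr : restrictLevels n g ∈ restrictLevels n '' G := ⟨g, hg, rfl⟩
    refine Set.mem_biUnion (mem_image_of_mem _ (hfin.mem_toFinset.mpr hr)) ?_
    refine treeDist_le_of_agreeUpTo fun k hk => ?_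
    rw [hτg k hk]
    exact congrFun (Function.invFunOn_eq hr) ⟨k, by omega⟩
  calc coverNum d (distClosure d G) n ≤ #s := Nat.sInf_le ⟨s, rfl, hcover⟩
    _ ≤ #hfin.toFinset := card_image_le
    _ = levelCard G n := (Nat.card_eq_card_finite_toFinset hfin).symm

lemma levelCard_zero_le_one [Subsingleton (V 0)] (G : Set (∀ k, Perm (V k))) :
    levelCard G 0 ≤ 1 := by
  refine Finite.card_le_one_iff_subsingleton.mpr ⟨?_⟩
  rintro ⟨_, σ, -, rfl⟩ ⟨_, τ, -, rfl⟩
  ext1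
  funext k
  obtain rfl := Fin.fin_one_eq_zero k
  exact Subsingleton.elim (σ 0) (τ 0)

lemma levelCard_succ_le (G : Subgroup (∀ k, Perm (V k))) (n : ℕ) :
    levelCard (G : Set (∀ k, Perm (V k))) (n + 1) ≤
      levelCard (G : Set (∀ k, Perm (V k))) n * Nat.card (levelStabAction G n) := by
  let R m := restrictLevels m '' (G : Set (∀ k, Perm (V k)))
  let lift {m : ℕ} (x : R m) : ∀ k, Perm (V k) := x.2.choose
  have lift_mem {m : ℕ} (x : R m) : lift x ∈ G := x.2.choose_spec.1
  have lift_spec {m : ℕ} (x : R m) : restrictLevels m (lift x) = x := x.2.choose_spec.2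
  let below (x : R (n + 1)) : R n := ⟨restrictLevels n (lift x), lift x, lift_mem x, rfl⟩
  have hstab (x : R (n + 1)) : lift x * (lift (below x))⁻¹ ∈ levelStab G n :=
    ⟨G.mul_mem (lift_mem x) (G.inv_mem (lift_mem _)), fun j hj =>
      mul_inv_eq_one.mpr (congrFun (lift_spec (below x)) ⟨j, by omega⟩).symm⟩
  -- `x` is determined by its restriction to level `n` and by the level-`(n + 1)` action of its
  -- quotient by a fixed lift of that restriction
  let f (x : R (n + 1)) : R n × levelStabAction G n :=
    (below x, ⟨_, _, hstab x, rfl⟩)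
  have hf : Function.Injective f := by
    intro x y hxy
    obtain ⟨hb, hq⟩ := Prod.ext_iff.mp hxy
    change below x = below y at hb
    have hp : (lift x) (n + 1) = (lift y) (n + 1) := by
      have hq : (lift x * (lift (below x))⁻¹) (n + 1) =
          (lift y * (lift (below y))⁻¹) (n + 1) := congrArg Subtype.val hq
      rw [hb] at hq
      exact mul_right_cancel hq
    rw [Subtype.ext_iff, ← lift_spec x, ← lift_spec y]
    exact restrictLevels_succ_eq (congrArg Subtype.val hb) hp
  calc levelCard (G : Set (∀ k, Perm (V k))) (n + 1) ≤ Nat.card (R n × levelStabAction G n) :=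
        Nat.card_le_card_of_injective f hf
    _ = _ := Nat.card_prod _ _

end Levels

section Orbits

variable {V : ℕ → Type*} [∀ k, Fintype (V k)] (G : Subgroup (∀ k, Perm (V k)))

def levelOrbit (n : ℕ) (v : V n) : Finset (V n) := {w | ∃ g ∈ G, g n v = w}

variable {G}

lemma mem_levelOrbit {n : ℕ} {v w : V n} : w ∈ levelOrbit G n v ↔ ∃ g ∈ G, g n v = w := by
  simp [levelOrbit]

lemma mem_levelOrbit_self {n : ℕ} (v : V n) : v ∈ levelOrbit G n v :=
  mem_levelOrbit.mpr ⟨1, G.one_mem, rfl⟩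

lemma levelOrbit_eq_of_mem {n : ℕ} {v w : V n} (h : w ∈ levelOrbit G n v) :
    levelOrbit G n w = levelOrbit G n v := by
  obtain ⟨g, hg, rfl⟩ := mem_levelOrbit.mp h
  ext u
  simp only [mem_levelOrbit]
  constructor
  · rintro ⟨g', hg', rfl⟩
    exact ⟨g' * g, G.mul_mem hg' hg, rfl⟩
  · rintro ⟨g', hg', rfl⟩
    exact ⟨g' * g⁻¹, G.mul_mem hg' (G.inv_mem hg), by simp⟩

end Orbits

namespace DaryTree

variable {d : ℕ}

lemma one_le_arity (T : DaryTree d) : 1 ≤ d := by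
  obtain ⟨r⟩ : Nonempty (T.V 0) := (Nat.card_pos_iff.mp (by rw [T.root_card]; exact one_pos)).1
  exact (T.child_lb 0 r).trans (T.child_ub 0 r)

variable (T : DaryTree d)

instance finite_V (n : ℕ) : Finite (T.V n) := by
  induction n with
  | zero => exact (Nat.card_pos_iff.mp (T.root_card ▸ Nat.one_pos)).2
  | succ n ih =>
    have (v : T.V n) : Finite {w // T.parent n w = v} :=
      (Nat.card_pos_iff.mp (T.child_lb n v)).2
    exact Finite.of_equiv _ (Equiv.sigmaFiberEquiv (T.parent n))

noncomputable instance (n : ℕ) : Fintype (T.V n) := Fintype.ofFinite _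

instance : Subsingleton (T.V 0) := (Nat.card_eq_one_iff_unique.mp T.root_card).1

variable {T} {G : Subgroup (∀ n, Perm (T.V n))}

lemma parent_apply_of_mem_aut {g : ∀ k, Perm (T.V k)} (hg : g ∈ T.aut) {n : ℕ}
    (w : T.V (n + 1)) : T.parent n (g (n + 1) w) = g n (T.parent n w) :=
  hg n w

lemma parent_apply_of_mem_levelStab (hG : G ≤ T.aut) {n : ℕ} {π : ∀ k, Perm (T.V k)}
    (hπ : π ∈ levelStab G n) (w : T.V (n + 1)) : T.parent n (π (n + 1) w) = T.parent n w := by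
  rw [parent_apply_of_mem_aut (hG hπ.1), hπ.2 n le_rfl, Perm.one_apply]

variable (T G)

def IsActive (n : ℕ) (v : T.V n) : Prop := ∃ w, T.parent n w = v ∧ IsMoved G n w

def activeOrbits (n : ℕ) : Finset (Finset (T.V n)) :=
  (univ.filter (T.IsActive G n)).image (levelOrbit G n)

def activeOrbitCount (n : ℕ) : ℕ := #(T.activeOrbits G n)

variable {T G}

lemma apply_eq_self_of_not_isActive {n : ℕ} {π : ∀ k, Perm (T.V k)}
    (hπ : π ∈ levelStab G n)
    {w : T.V (n + 1)} (hw : ¬ T.IsActive G n (T.parent n w)) : π (n + 1) w = w := by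
  by_contra h
  exact hw ⟨w, rfl, π, hπ, h⟩

lemma isActive_of_mem_levelOrbit (hG : G ≤ T.aut) {n : ℕ} {v v' : T.V n}
    (hv' : v' ∈ levelOrbit G n v) (hv : T.IsActive G n v) : T.IsActive G n v' := by
  obtain ⟨g, hg, rfl⟩ := mem_levelOrbit.mp hv'
  obtain ⟨w, rfl, π, hπ, hπw⟩ := hv
  refine ⟨g (n + 1) w, parent_apply_of_mem_aut (hG hg) w, g * π * g⁻¹, ?_, ?_⟩
  · exact ⟨G.mul_mem (G.mul_mem hg hπ.1) (G.inv_mem hg), fun j hj => by simp [hπ.2 j hj]⟩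
  · simpa using hπw

/-- Conjugating by `g ∈ G`, which commutes with `levelStab G n`, transports the action of
`levelStab G n` on the children of `v` to the children of `g v`. -/
lemma levelStab_apply_eq_of_eqOn_children (hG : G ≤ T.aut)
    (hab : ∀ a ∈ G, ∀ b ∈ G, a * b = b * a) {n : ℕ} {π π' : ∀ k, Perm (T.V k)}
    (hπ : π ∈ levelStab G n) (hπ' : π' ∈ levelStab G n)
    {g : ∀ k, Perm (T.V k)} (hg : g ∈ G) {v : T.V n}
    (h : ∀ u, T.parent n u = v → π (n + 1) u = π' (n + 1) u)
    {w : T.V (n + 1)} (hw : T.parent n w = g n v) : π (n + 1) w = π' (n + 1) w := by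
  set u := (g (n + 1))⁻¹ w
  have hu : T.parent n u = v := by
    have := parent_apply_of_mem_aut (hG (G.inv_mem hg)) w
    rw [hw] at this
    simp only [Pi.inv_apply, Perm.inv_def, symm_apply_apply] at this
    exact this
  have hwu : w = g (n + 1) u := by simp [u]
  have hcomm {ρ : ∀ k, Perm (T.V k)} (hρ : ρ ∈ G) :
      ρ (n + 1) (g (n + 1) u) = g (n + 1) (ρ (n + 1) u) :=
    congrFun (congrArg (⇑) (congrFun (hab ρ hρ g hg) (n + 1))) u
  rw [hwu, hcomm hπ.1, hcomm hπ'.1, h u hu]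

lemma card_levelStabAction_le (hG : G ≤ T.aut) (hab : ∀ a ∈ G, ∀ b ∈ G, a * b = b * a)
    (n : ℕ) :
    Nat.card (levelStabAction G n) ≤ d ! ^ T.activeOrbitCount G n := by
  let rep (z : T.activeOrbits G n) : T.V n := (mem_image.mp z.2).choose
  have rep_spec (z : T.activeOrbits G n) : levelOrbit G n (rep z) = z :=
    (mem_image.mp z.2).choose_spec.2
  let Φ (p : Perm (T.V (n + 1))) (z : T.activeOrbits G n) :
      Perm {w // T.parent n w = rep z} :=
    if h : ∀ w, T.parent n (p w) = rep z ↔ T.parent n w = rep z then p.subtypePerm h else 1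
  have hΦ : Set.InjOn Φ (levelStabAction G n) := by
    rintro _ ⟨π, hπ, rfl⟩ _ ⟨π', hπ', rfl⟩ hΦππ'
    ext w : 1
    by_cases hw : T.IsActive G n (T.parent n w)
    · let z : T.activeOrbits G n :=
        ⟨_, mem_image_of_mem _ (mem_filter.mpr ⟨mem_univ _, hw⟩)⟩
      obtain ⟨g, hg, hgz⟩ := mem_levelOrbit.mp
        ((rep_spec z).symm ▸ mem_levelOrbit_self (G := G) (T.parent n w) :
          T.parent n w ∈ levelOrbit G n (rep z))
      refine levelStab_apply_eq_of_eqOn_children hG hab hπ hπ' hg (fun u hu => ?_) hgz.symm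
      have := congrArg Subtype.val (Equiv.ext_iff.mp (congrFun hΦππ' z) ⟨u, hu⟩)
      simpa [Φ, parent_apply_of_mem_levelStab hG hπ, parent_apply_of_mem_levelStab hG hπ']
        using this
    · rw [apply_eq_self_of_not_isActive hπ hw, apply_eq_self_of_not_isActive hπ' hw]
  calc Nat.card (levelStabAction G n)
      ≤ Nat.card (∀ z : T.activeOrbits G n, Perm {w // T.parent n w = rep z}) :=
        Nat.card_le_card_of_injective _ (Set.injOn_iff_injective.mp hΦ)
    _ = ∏ z : T.activeOrbits G n, (Nat.card {w // T.parent n w = rep z})! := by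
        simp only [Nat.card_pi, Nat.card_perm]
    _ ≤ ∏ _z : T.activeOrbits G n, d ! :=
        prod_le_prod' fun z _ => Nat.factorial_le (T.child_ub n (rep z))
    _ = d ! ^ T.activeOrbitCount G n := by simp [activeOrbitCount]

lemma levelCard_le (hG : G ≤ T.aut) (hab : ∀ a ∈ G, ∀ b ∈ G, a * b = b * a) (n : ℕ) :
    levelCard (G : Set (∀ k, Perm (T.V k))) n ≤
      d ! ^ ∑ k ∈ range n, T.activeOrbitCount G k := by
  induction n with
  | zero => simpa using levelCard_zero_le_one _
  | succ n ih =>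
    calc levelCard (G : Set (∀ k, Perm (T.V k))) (n + 1)
        ≤ levelCard (G : Set (∀ k, Perm (T.V k))) n * Nat.card (levelStabAction G n) :=
          levelCard_succ_le G n
      _ ≤ d ! ^ (∑ k ∈ range n, T.activeOrbitCount G k) * d ! ^ T.activeOrbitCount G n :=
          Nat.mul_le_mul ih (card_levelStabAction_le hG hab n)
      _ = d ! ^ ∑ k ∈ range (n + 1), T.activeOrbitCount G k := by
          rw [← pow_add, sum_range_succ]

variable (T G)

def movedCount : ∀ n, T.V n → ℕ
  | 0, _ => 0
  | n + 1, w => movedCount n (T.parent n w) + if IsMoved G n w then 1 else 0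

variable {T G}

lemma two_pow_mul_card_levelOrbit_parent_le (hG : G ≤ T.aut) {n : ℕ} (w : T.V (n + 1)) :
    2 ^ (if IsMoved G n w then 1 else 0) * #(levelOrbit G n (T.parent n w)) ≤
      #(levelOrbit G (n + 1) w) := by
  refine mul_card_image_le_card_of_maps_to (f := T.parent n) (fun u hu => ?_) _ fun b hb => ?_
  · obtain ⟨g, hg, rfl⟩ := mem_levelOrbit.mp hu
    exact mem_levelOrbit.mpr ⟨g, hg, (parent_apply_of_mem_aut (hG hg) w).symm⟩
  obtain ⟨g, hg, rfl⟩ := mem_levelOrbit.mp hb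
  have hmem {ρ : ∀ k, Perm (T.V k)} (hρ : ρ ∈ G) (hρn : ρ n = g n) :
      ρ (n + 1) w ∈ {u ∈ levelOrbit G (n + 1) w | T.parent n u = g n (T.parent n w)} :=
    mem_filter.mpr ⟨mem_levelOrbit.mpr ⟨ρ, hρ, rfl⟩, by
      rw [parent_apply_of_mem_aut (hG hρ), hρn]⟩
  split_ifs with hw
  · obtain ⟨π, hπ, hπw⟩ := hw
    have hne : g (n + 1) w ≠ (g * π) (n + 1) w := fun h => hπw ((g (n + 1)).injective h).symm
    rw [pow_one, ← card_pair hne]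
    refine card_le_card (insert_subset (hmem hg rfl) (singleton_subset_iff.mpr (hmem ?_ ?_)))
    · exact G.mul_mem hg hπ.1
    · simp [hπ.2 n le_rfl]
  · exact card_pos.mpr ⟨_, hmem hg rfl⟩

lemma two_pow_movedCount_le_card_levelOrbit (hG : G ≤ T.aut) :
    ∀ n (v : T.V n), 2 ^ T.movedCount G n v ≤ #(levelOrbit G n v)
  | 0, v => by simpa [movedCount] using card_pos.mpr ⟨v, mem_levelOrbit_self v⟩
  | n + 1, w => by
    rw [movedCount, pow_add, mul_comm]
    exact (Nat.mul_le_mul_left _ (two_pow_movedCount_le_card_levelOrbit hG n _)).trans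
      (two_pow_mul_card_levelOrbit_parent_le hG w)

variable (T G)

def weight (n : ℕ) (v : T.V n) : ℝ := 2⁻¹ ^ T.movedCount G n v

def mass : ∀ n, T.V n → ℝ
  | 0, _ => 1
  | n + 1, w => mass n (T.parent n w) / Nat.card {u // T.parent n u = T.parent n w}

def potential (n : ℕ) : ℝ := ∑ v, T.mass n v * T.weight G n v

def movedMass (n : ℕ) : ℝ :=
  ∑ w ∈ univ.filter (IsMoved G n), T.mass (n + 1) w * T.weight G (n + 1) w

variable {T G}

lemma weight_pos {n : ℕ} (v : T.V n) : 0 < T.weight G n v := by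
  unfold weight
  positivity

lemma weight_succ {n : ℕ} (w : T.V (n + 1)) :
    T.weight G (n + 1) w = T.weight G n (T.parent n w) * if IsMoved G n w then 2⁻¹ else 1 := by
  unfold weight
  rw [movedCount, pow_add]
  split_ifs <;> simp

lemma one_le_sum_weight_levelOrbit (hG : G ≤ T.aut) {n : ℕ} (v₀ : T.V n) :
    1 ≤ ∑ v ∈ levelOrbit G n v₀, T.weight G n v := by
  have hpos : (0 : ℝ) < #(levelOrbit G n v₀) := by
    exact_mod_cast card_pos.mpr ⟨v₀, mem_levelOrbit_self v₀⟩
  calc (1 : ℝ) = ∑ _v ∈ levelOrbit G n v₀, (#(levelOrbit G n v₀) : ℝ)⁻¹ := by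
        rw [sum_const, nsmul_eq_mul, mul_inv_cancel₀ hpos.ne']
    _ ≤ _ := sum_le_sum fun v hv => by
        rw [weight, inv_pow, ← levelOrbit_eq_of_mem hv]
        exact inv_anti₀ (by positivity)
          (by exact_mod_cast two_pow_movedCount_le_card_levelOrbit hG n v)

lemma activeOrbitCount_le_sum_weight (hG : G ≤ T.aut) (n : ℕ) :
    (T.activeOrbitCount G n : ℝ) ≤ ∑ v ∈ univ.filter (T.IsActive G n), T.weight G n v := by
  rw [← sum_fiberwise_of_maps_to fun v hv => mem_image_of_mem (levelOrbit G n) hv]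
  calc (T.activeOrbitCount G n : ℝ) = ∑ _z ∈ T.activeOrbits G n, (1 : ℝ) := by
        simp [activeOrbitCount]
    _ ≤ _ := sum_le_sum fun z hz => ?_
  obtain ⟨v₀, hv₀, rfl⟩ := mem_image.mp hz
  refine (one_le_sum_weight_levelOrbit hG v₀).trans
    (sum_le_sum_of_subset_of_nonneg (fun v hv => ?_) fun v _ _ => (weight_pos v).le)
  exact mem_filter.mpr ⟨mem_filter.mpr ⟨mem_univ _,
    isActive_of_mem_levelOrbit hG hv (mem_filter.mp hv₀).2⟩, levelOrbit_eq_of_mem hv⟩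

lemma sum_weight_isActive_le (n : ℕ) :
    ∑ v ∈ univ.filter (T.IsActive G n), T.weight G n v ≤
      2 * ∑ w ∈ univ.filter (IsMoved G n), T.weight G (n + 1) w := by
  rw [← sum_fiberwise (univ.filter (IsMoved G n)) (T.parent n), mul_sum]
  refine (sum_le_sum fun v hv => ?_).trans
    (sum_le_sum_of_subset_of_nonneg (filter_subset _ _) fun _ _ _ => ?_)
  · obtain ⟨w, hwv, hw⟩ := (mem_filter.mp hv).2
    calc T.weight G n v = 2 * T.weight G (n + 1) w := by
          rw [weight_succ, if_pos hw, hwv]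
          ring
      _ ≤ _ := mul_le_mul_of_nonneg_left (single_le_sum (fun u _ => (weight_pos u).le)
          (mem_filter.mpr ⟨mem_filter.mpr ⟨mem_univ _, hw⟩, hwv⟩)) zero_le_two
  · exact mul_nonneg zero_le_two (sum_nonneg fun u _ => (weight_pos u).le)

lemma mass_pos : ∀ n (v : T.V n), 0 < T.mass n v
  | 0, _ => one_pos
  | n + 1, w => div_pos (mass_pos n _) (by exact_mod_cast T.child_lb n _)

lemma inv_pow_le_mass : ∀ n (v : T.V n), ((d : ℝ) ^ n)⁻¹ ≤ T.mass n v
  | 0, v => by simp [mass]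
  | n + 1, w => by
    have hc : 1 ≤ Nat.card {u // T.parent n u = T.parent n w} := T.child_lb n _
    have hcd := T.child_ub n (T.parent n w)
    have hd : (0 : ℝ) < d := by exact_mod_cast hc.trans hcd
    have ih := inv_pow_le_mass n (T.parent n w)
    calc ((d : ℝ) ^ (n + 1))⁻¹ = ((d : ℝ) ^ n)⁻¹ / d := by
          rw [pow_succ, mul_inv, div_eq_mul_inv]
      _ ≤ T.mass n (T.parent n w) / d := div_le_div_of_nonneg_right ih hd.le
      _ ≤ T.mass n (T.parent n w) / Nat.card {u // T.parent n u = T.parent n w} :=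
          div_le_div_of_nonneg_left (mass_pos n _).le
            (by exact_mod_cast hc) (by exact_mod_cast hcd)

lemma sum_mass_children (n : ℕ) (v : T.V n) :
    ∑ w ∈ univ.filter (T.parent n · = v), T.mass (n + 1) w = T.mass n v := by
  have hc : (Nat.card {u // T.parent n u = v} : ℝ) = #(univ.filter (T.parent n · = v)) := by
    rw [Nat.card_eq_fintype_card, Fintype.card_subtype]
  have hpos : (0 : ℝ) < Nat.card {u // T.parent n u = v} := by exact_mod_cast T.child_lb n v
  rw [sum_congr rfl fun w hw => show T.mass (n + 1) w = T.mass n v / Nat.card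
    {u // T.parent n u = v} by rw [mass, (mem_filter.mp hw).2], sum_const, nsmul_eq_mul, ← hc]
  field_simp

/-- Mass is conserved from a vertex to its children, while the weight halves at moved vertices
and is inherited at the others. -/
lemma potential_succ_add_movedMass (n : ℕ) :
    T.potential G (n + 1) + T.movedMass G n = T.potential G n := by
  rw [potential, movedMass, sum_filter, ← sum_add_distrib, potential,
    ← sum_fiberwise univ (T.parent n)]
  refine sum_congr rfl fun v _ => ?_
  rw [← sum_mass_children n v, sum_mul]
  refine sum_congr rfl fun w hw => ?_
  rw [weight_succ, (mem_filter.mp hw).2]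
  split_ifs <;> ring

lemma potential_zero : T.potential G 0 = 1 := by
  simp [potential, mass, weight, movedCount, ← Nat.card_eq_fintype_card, T.root_card]

lemma potential_nonneg (n : ℕ) : 0 ≤ T.potential G n :=
  sum_nonneg fun v _ => (mul_pos (mass_pos n v) (weight_pos v)).le

lemma movedMass_nonneg (n : ℕ) : 0 ≤ T.movedMass G n :=
  sum_nonneg fun w _ => (mul_pos (mass_pos _ w) (weight_pos w)).le

lemma tendsto_movedMass_zero : Tendsto (T.movedMass G) atTop (𝓝 0) := by
  refine (summable_of_sum_range_le (c := 1) movedMass_nonneg fun n => ?_).tendsto_atTop_zero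
  have htel : ∑ k ∈ range n, T.movedMass G k = T.potential G 0 - T.potential G n := by
    rw [← sum_range_sub']
    exact sum_congr rfl fun k _ => eq_sub_of_add_eq' (potential_succ_add_movedMass k)
  rw [htel, potential_zero]
  linarith [potential_nonneg (T := T) (G := G) n]

lemma sum_weight_isMoved_le (n : ℕ) :
    ∑ w ∈ univ.filter (IsMoved G n), T.weight G (n + 1) w ≤
      (d : ℝ) ^ (n + 1) * T.movedMass G n := by
  have hd : (0 : ℝ) < (d : ℝ) ^ (n + 1) := pow_pos (by exact_mod_cast T.one_le_arity) _
  rw [movedMass, mul_sum]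
  refine sum_le_sum fun w _ => ?_
  rw [← mul_assoc]
  exact le_mul_of_one_le_left (weight_pos w).le
    ((inv_le_iff_one_le_mul₀' hd).mp (inv_pow_le_mass (n + 1) w))

lemma activeOrbitCount_isLittleO (hG : G ≤ T.aut) :
    (fun n => (T.activeOrbitCount G n : ℝ)) =o[atTop] fun n => (d : ℝ) ^ n := by
  have hd : (0 : ℝ) < d := by exact_mod_cast T.one_le_arity
  refine (isLittleO_iff_tendsto fun n h => absurd h (pow_pos hd n).ne').mpr ?_
  refine squeeze_zero (fun n => by positivity) (fun n => ?_)
    (by simpa using (tendsto_movedMass_zero (T := T) (G := G)).const_mul (2 * d : ℝ))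
  rw [div_le_iff₀ (pow_pos hd n)]
  calc (T.activeOrbitCount G n : ℝ)
      ≤ ∑ v ∈ univ.filter (T.IsActive G n), T.weight G n v :=
        activeOrbitCount_le_sum_weight hG n
    _ ≤ 2 * ∑ w ∈ univ.filter (IsMoved G n), T.weight G (n + 1) w := sum_weight_isActive_le n
    _ ≤ 2 * ((d : ℝ) ^ (n + 1) * T.movedMass G n) := by gcongr; exact sum_weight_isMoved_le n
    _ = 2 * d * T.movedMass G n * (d : ℝ) ^ n := by ring

lemma sum_activeOrbitCount_isLittleO (hG : G ≤ T.aut) :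
    (fun n => ((∑ k ∈ range n, T.activeOrbitCount G k : ℕ) : ℝ)) =o[atTop]
      fun n => (scaleExp d n : ℝ) := by
  have hscale : Tendsto (fun n => (scaleExp d n : ℝ)) atTop atTop :=
    tendsto_natCast_atTop_atTop.comp
      (tendsto_atTop_mono (le_scaleExp T.one_le_arity) tendsto_id)
  push_cast [scaleExp] at hscale ⊢
  exact (activeOrbitCount_isLittleO hG).sum_range (fun n => by positivity) hscale

end DaryTree

end

/-- **Abelian subgroups of the automorphism group of an infinite `d`-ary rooted tree
have vanishing Minkowski dimension**: the Minkowski dimension of the closure of an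
abelian subgroup `G ≤ Aut(T)` exists and equals `0`. -/
theorem arboreal_abelian_small {d : ℕ} (hd : 2 ≤ d) (T : DaryTree d)
    (G : Subgroup (∀ n, Equiv.Perm (T.V n))) (hGsub : G ≤ T.aut)
    (hab : ∀ a ∈ G, ∀ b ∈ G, a * b = b * a) :
    HasDim d (distClosure d (G : Set (∀ n, Equiv.Perm (T.V n)))) 0 :=
  hasDim_zero_of_coverNum_le hd _
    (fun n => (coverNum_distClosure_le_levelCard hd _ n).trans (DaryTree.levelCard_le hGsub hab n))
    (DaryTree.sum_activeOrbitCount_isLittleO hGsub).tendsto_div_nhds_zero
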